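/- Assume (p₀), (V_α), (G_β). Then there exists a constant C > 1 such that, whenever U₁ ⊂ U₂ ⊂⊂ G satisfy d(U₁, U₂^c) ≥ C·(diam(U₁) ∨ 1), the killed Green function satisfies (c₂/2)·d(x,y)^{−ν} ≤ g_{U₂}(x,y) ≤ C₂·d(x,y)^{−ν} for all distinct x,y ∈ U₁, and (c₂/2) ≤ g_{U₂}(x,x) ≤ C₂ for all x ∈ U₁. -/

import Mathlib

open scoped ENNReal

open Classical in
noncomputable def nstep {V : Type*} (p : V → V → ℝ) : ℕ → V → V → ℝ
  | 0, x, y => if x = y then 1 else 0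
  | n + 1, x, y => ∑' z, nstep p n x z * p z y

noncomputable def green {V : Type*} (p : V → V → ℝ) (lam : V → ℝ) (x y : V) : ℝ :=
  (1 / lam y) * ∑' n, nstep p n x y

open Classical in
noncomputable def killedKernel {V : Type*} (p : V → V → ℝ) (U : Set V) (x y : V) : ℝ :=
  if x ∈ U ∧ y ∈ U then p x y else 0

noncomputable def killedGreen {V : Type*} (p : V → V → ℝ) (lam : V → ℝ) (U : Set V) (x y : V) : ℝ :=
  (1 / lam y) * ∑' n, nstep (killedKernel p U) n x y

open Classical in
noncomputable def hitProb {V : Type*} (p : V → V → ℝ) (A : Set V) (x : V) : ℝ :=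
  ∑' n : ℕ, ∑' y : V, if y ∈ A then nstep (fun a b => if a ∈ A then 0 else p a b) n x y else 0

open Classical in
noncomputable def eqMeasure {V : Type*} (p : V → V → ℝ) (lam : V → ℝ) (A : Set V) (x : V) : ℝ :=
  if x ∈ A then lam x * (1 - ∑' y, p x y * hitProb p A y) else 0

noncomputable def capaE {V : Type*} (p : V → V → ℝ) (lam : V → ℝ) (A : Set V) : ℝ≥0∞ :=
  ∑' x : V, Set.indicator A (fun v => ENNReal.ofReal (eqMeasure p lam A v)) x

/-! Split the transition kernel as `P = Q + R`, where `Q` is the walk killed outside `U₂` and `R`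
collects the remaining steps. Expanding `(Q + R) ^ (n + 1)` in the semiring of operators on
`V → ℝ≥0∞` gives the resolvent identity `G_P = G_Q + G_Q R G_P`: a walk from `x ∈ U₂` either
stays in `U₂`, or leaves it at some `u ∉ U₂` and then runs freely. The exit distribution
`G_Q R 1` has total mass at most one, hence
`g_{U₂}(x, y) ≤ g(x, y) ≤ g_{U₂}(x, y) + sup_{u ∉ U₂} g(u, y)`, and by `(G_β)` the last term is at
most `C₂ (C · (diam U₁ ∨ 1))^{-ν}`, which is below `c₂/2 · d(x, y)^{-ν}` once `C` is large. -/

open Finset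

theorem map_mono_of_canonicallyOrderedAdd {F M N : Type*} [AddCommMonoid M] [PartialOrder M]
    [CanonicallyOrderedAdd M] [AddCommMonoid N] [PartialOrder N] [CanonicallyOrderedAdd N]
    [FunLike F M N] [AddHomClass F M N] (f : F) : Monotone f := by
  intro a b h
  obtain ⟨c, rfl⟩ := exists_add_of_le h
  rw [map_add]
  exact le_self_add

theorem add_pow_succ_eq_pow_succ_add_sum_antidiagonal {R : Type*} [Semiring R] (a b : R)
    (n : ℕ) :
    (a + b) ^ (n + 1) = a ^ (n + 1) + ∑ ij ∈ antidiagonal n, a ^ ij.1 * b * (a + b) ^ ij.2 := by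
  induction n with
  | zero => simp
  | succ n ih =>
    rw [pow_succ' _ (n + 1), add_mul]
    nth_rw 1 [ih]
    rw [Nat.sum_antidiagonal_succ, mul_add, mul_sum]
    simp only [pow_zero, one_mul, pow_succ' a, mul_assoc]
    abel

theorem ENNReal.tsum_sum_antidiagonal (F : ℕ × ℕ → ℝ≥0∞) :
    ∑' n, ∑ kl ∈ antidiagonal n, F kl = ∑' k, ∑' l, F (k, l) := by
  rw [← ENNReal.tsum_prod, ← HasAntidiagonal.sigmaAntidiagonalEquivProd.tsum_eq F,
    ENNReal.tsum_sigma']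
  refine tsum_congr fun n => ?_
  rw [← Finset.sum_finset_coe, ← tsum_fintype (L := .unconditional _)]
  rfl

section Operators

variable {V : Type*}

noncomputable def kernelOp (P : V → V → ℝ≥0∞) : Module.End ℝ≥0∞ (V → ℝ≥0∞) where
  toFun f x := ∑' z, P x z * f z
  map_add' f g := by
    ext x
    simp only [Pi.add_apply, mul_add, ENNReal.tsum_add]
  map_smul' c f := by
    ext x
    simp only [Pi.smul_apply, smul_eq_mul, RingHom.id_apply, mul_left_comm _ c,
      ENNReal.tsum_mul_left]

@[simp]
theorem kernelOp_apply (P : V → V → ℝ≥0∞) (f : V → ℝ≥0∞) (x : V) :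
    kernelOp P f x = ∑' z, P x z * f z := rfl

theorem kernelOp_add (P Q : V → V → ℝ≥0∞) : kernelOp (P + Q) = kernelOp P + kernelOp Q := by
  ext f x
  simp only [kernelOp_apply, Pi.add_apply, LinearMap.add_apply, add_mul, ENNReal.tsum_add]

theorem kernelOp_single [DecidableEq V] (P : V → V → ℝ≥0∞) (y : V) :
    kernelOp P (Pi.single y 1) = fun w => P w y := by
  ext w
  simp [Pi.single_apply]

def PreservesTsum (T : Module.End ℝ≥0∞ (V → ℝ≥0∞)) : Prop :=
  ∀ f : ℕ → V → ℝ≥0∞, T (fun x => ∑' n, f n x) = fun x => ∑' n, T (f n) x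

theorem preservesTsum_kernelOp (P : V → V → ℝ≥0∞) : PreservesTsum (kernelOp P) := by
  intro f
  ext x
  simp only [kernelOp_apply, ← ENNReal.tsum_mul_left]
  exact ENNReal.tsum_comm

theorem PreservesTsum.mul {S T : Module.End ℝ≥0∞ (V → ℝ≥0∞)} (hS : PreservesTsum S)
    (hT : PreservesTsum T) : PreservesTsum (S * T) := by
  intro f
  rw [Module.End.mul_apply, hT, hS]
  rfl

theorem PreservesTsum.pow {T : Module.End ℝ≥0∞ (V → ℝ≥0∞)} (hT : PreservesTsum T) :
    ∀ k : ℕ, PreservesTsum (T ^ k)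
  | 0 => fun f => rfl
  | k + 1 => by rw [pow_succ]; exact (hT.pow k).mul hT

end Operators

section Potential

variable {V : Type*}

noncomputable def potential (T : Module.End ℝ≥0∞ (V → ℝ≥0∞)) (f : V → ℝ≥0∞) : V → ℝ≥0∞ :=
  fun x => ∑' n, (T ^ n) f x

theorem potential_apply (T : Module.End ℝ≥0∞ (V → ℝ≥0∞)) (f : V → ℝ≥0∞) (x : V) :
    potential T f x = ∑' n, (T ^ n) f x := rfl

theorem potential_eq_add_tsum_succ (T : Module.End ℝ≥0∞ (V → ℝ≥0∞)) (f : V → ℝ≥0∞) (x : V) :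
    potential T f x = f x + ∑' n, (T ^ (n + 1)) f x := by
  rw [potential_apply, tsum_eq_zero_add' ENNReal.summable, pow_zero, Module.End.one_apply]

theorem potential_add (S R : Module.End ℝ≥0∞ (V → ℝ≥0∞))
    (h : ∀ k, PreservesTsum (S ^ k * R)) (f : V → ℝ≥0∞) :
    potential (S + R) f = potential S f + potential S (R (potential (S + R) f)) := by
  ext x
  have hR : ∀ k, (S ^ k) (R (potential (S + R) f)) x
      = ∑' m, (S ^ k * R * (S + R) ^ m) f x := fun k => by
    rw [← Module.End.mul_apply]
    unfold potential
    rw [h k]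
    rfl
  rw [Pi.add_apply]
  calc potential (S + R) f x
      = f x + ∑' n, ((S ^ (n + 1)) f x
          + ∑ ij ∈ antidiagonal n, (S ^ ij.1 * R * (S + R) ^ ij.2) f x) := by
        simp only [potential_eq_add_tsum_succ, add_pow_succ_eq_pow_succ_add_sum_antidiagonal,
          LinearMap.add_apply, LinearMap.sum_apply, Pi.add_apply, Finset.sum_apply]
    _ = (f x + ∑' n, (S ^ (n + 1)) f x)
          + ∑' k, ∑' m, (S ^ k * R * (S + R) ^ m) f x := by
        rw [ENNReal.tsum_add, ENNReal.tsum_sum_antidiagonal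
          (fun ij => (S ^ ij.1 * R * (S + R) ^ ij.2) f x), add_assoc]
    _ = potential S f x + potential S (R (potential (S + R) f)) x := by
        rw [potential_eq_add_tsum_succ S f x, potential_apply]
        simp only [hR]

theorem potential_apply_one_le_one (S R : Module.End ℝ≥0∞ (V → ℝ≥0∞))
    (h : (S + R) 1 ≤ 1) : potential S (R 1) ≤ 1 := by
  have partial_le : ∀ N, ∑ k ∈ range N, (S ^ k) (R 1) + (S ^ N) 1 ≤ 1 := by
    intro N
    induction N with
    | zero => simp
    | succ N ih =>
      calc ∑ k ∈ range (N + 1), (S ^ k) (R 1) + (S ^ (N + 1)) 1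
          = S (∑ k ∈ range N, (S ^ k) (R 1) + (S ^ N) 1) + R 1 := by
            simp only [sum_range_succ', pow_succ', Module.End.mul_apply, map_add, map_sum,
              pow_zero, Module.End.one_apply]
            abel
        _ ≤ S 1 + R 1 := by gcongr; exact map_mono_of_canonicallyOrderedAdd S ih
        _ ≤ 1 := h
  intro x
  refine ENNReal.tsum_le_of_sum_range_le fun N => ?_
  calc ∑ k ∈ range N, (S ^ k) (R 1) x
      ≤ (∑ k ∈ range N, (S ^ k) (R 1) + (S ^ N) 1) x := by
        rw [Pi.add_apply, Finset.sum_apply]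
        exact le_self_add
    _ ≤ 1 := partial_le N x

end Potential

section Killing

variable {V : Type*} {U : Set V}

theorem potential_kernelOp_add (Q R : V → V → ℝ≥0∞) (f : V → ℝ≥0∞) :
    potential (kernelOp (Q + R)) f = potential (kernelOp Q) f
      + potential (kernelOp Q) (kernelOp R (potential (kernelOp (Q + R)) f)) := by
  rw [kernelOp_add]
  exact potential_add _ _ (fun k => ((preservesTsum_kernelOp Q).pow k).mul
    (preservesTsum_kernelOp R)) f

theorem potential_kernelOp_le_add (Q R : V → V → ℝ≥0∞) (f : V → ℝ≥0∞) :
    potential (kernelOp Q) f ≤ potential (kernelOp (Q + R)) f := by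
  rw [potential_kernelOp_add]
  exact le_self_add

theorem pow_kernelOp_apply_le_of_le_on {Q : V → V → ℝ≥0∞} (hQ : ∀ a b, b ∉ U → Q a b = 0)
    {f g : V → ℝ≥0∞} (hfg : ∀ u ∈ U, f u ≤ g u) (k : ℕ) {x : V} (hx : x ∈ U) :
    ((kernelOp Q) ^ k) f x ≤ ((kernelOp Q) ^ k) g x := by
  induction k generalizing x with
  | zero => exact hfg x hx
  | succ k ih =>
    simp only [pow_succ', Module.End.mul_apply, kernelOp_apply]
    refine ENNReal.tsum_le_tsum fun z => ?_
    by_cases hz : z ∈ U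
    · gcongr
      exact ih hz
    · simp [hQ x z hz]

theorem potential_le_potential_add_of_exit {Q R : V → V → ℝ≥0∞}
    (hQR : kernelOp (Q + R) 1 ≤ 1) (hQ : ∀ a b, b ∉ U → Q a b = 0)
    (hR : ∀ a ∈ U, ∀ b ∈ U, R a b = 0) (f : V → ℝ≥0∞) {x : V} (hx : x ∈ U) {K : ℝ≥0∞}
    (hK : ∀ u ∉ U, potential (kernelOp (Q + R)) f u ≤ K) :
    potential (kernelOp (Q + R)) f x ≤ potential (kernelOp Q) f x + K := by
  have hdecomp := congrFun (potential_kernelOp_add Q R f) x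
  set g := potential (kernelOp (Q + R)) f
  have hexit : ∀ w ∈ U, kernelOp R g w ≤ (K • kernelOp R 1) w := by
    intro w hw
    simp only [kernelOp_apply, Pi.smul_apply, smul_eq_mul, Pi.one_apply, mul_one,
      ← ENNReal.tsum_mul_left]
    refine ENNReal.tsum_le_tsum fun u => ?_
    by_cases hu : u ∈ U
    · simp [hR w hw u hu]
    · rw [mul_comm]
      gcongr
      exact hK u hu
  have hmass : potential (kernelOp Q) (kernelOp R 1) x ≤ 1 := by
    refine potential_apply_one_le_one _ _ ?_ x
    rwa [← kernelOp_add]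
  rw [hdecomp, Pi.add_apply]
  gcongr
  calc potential (kernelOp Q) (kernelOp R g) x
      ≤ ∑' k, ((kernelOp Q) ^ k) (K • kernelOp R 1) x :=
        ENNReal.tsum_le_tsum fun k => pow_kernelOp_apply_le_of_le_on hQ hexit k hx
    _ = K * potential (kernelOp Q) (kernelOp R 1) x := by
        simp only [map_smul, Pi.smul_apply, smul_eq_mul, ENNReal.tsum_mul_left, potential_apply]
    _ ≤ K := mul_le_of_le_one_right' hmass

end Killing

section RealKernels

variable {V : Type*} {p : V → V → ℝ}

theorem nstep_nonneg (hp : ∀ a b, 0 ≤ p a b) :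
    ∀ (n : ℕ) (x y : V), 0 ≤ nstep p n x y
  | 0, x, y => by
    simp only [nstep]
    split <;> norm_num
  | n + 1, x, y => tsum_nonneg fun z => mul_nonneg (nstep_nonneg hp n x z) (hp z y)

theorem ofReal_nstep [DecidableEq V] (hp : ∀ a b, 0 ≤ p a b)
    {s : V → Finset V} (hs : ∀ z y, p z y ≠ 0 → z ∈ s y) (n : ℕ) (x y : V) :
    ENNReal.ofReal (nstep p n x y)
      = ((kernelOp fun a b => ENNReal.ofReal (p a b)) ^ n) (Pi.single y 1) x := by
  induction n generalizing y with
  | zero =>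
    simp only [nstep, pow_zero, Module.End.one_apply, Pi.single_apply]
    split_ifs <;> simp_all
  | succ n ih =>
    -- By `hs` the real `tsum` in `nstep` is a finite sum, hence not a junk value.
    have hcol : (fun w => ENNReal.ofReal (p w y))
        = ∑ z ∈ s y, ENNReal.ofReal (p z y) • Pi.single z 1 := by
      ext w
      simp only [Finset.sum_apply, Pi.smul_apply, Pi.single_apply, smul_eq_mul, mul_ite,
        mul_one, mul_zero, Finset.sum_ite_eq]
      split_ifs with hw
      · rfl
      · rw [not_imp_comm.mp (hs w y) hw, ENNReal.ofReal_zero]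
    have hsupp : ∀ z ∉ s y, nstep p n x z * p z y = 0 := fun z hz => by
      rw [not_imp_comm.mp (hs z y) hz, mul_zero]
    rw [nstep, tsum_eq_sum hsupp, ENNReal.ofReal_sum_of_nonneg fun z _ =>
        mul_nonneg (nstep_nonneg hp n x z) (hp z y), pow_succ, Module.End.mul_apply,
      kernelOp_single, hcol, map_sum, Finset.sum_apply]
    refine Finset.sum_congr rfl fun z _ => ?_
    rw [ENNReal.ofReal_mul (nstep_nonneg hp n x z), ih, map_smul, Pi.smul_apply, smul_eq_mul,
      mul_comm]

theorem potential_single_eq_ofReal_tsum [DecidableEq V] (hp : ∀ a b, 0 ≤ p a b)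
    {s : V → Finset V} (hs : ∀ z y, p z y ≠ 0 → z ∈ s y) {x y : V}
    (hsum : Summable fun n => nstep p n x y) :
    potential (kernelOp fun a b => ENNReal.ofReal (p a b)) (Pi.single y 1) x
      = ENNReal.ofReal (∑' n, nstep p n x y) := by
  rw [potential_apply, ENNReal.ofReal_tsum_of_nonneg (fun n => nstep_nonneg hp n x y) hsum]
  simp only [ofReal_nstep hp hs]

/-- No summability is needed: when the series diverges, both sides are junk `0`. -/
theorem tsum_nstep_eq_toReal_potential [DecidableEq V] (hp : ∀ a b, 0 ≤ p a b)
    {s : V → Finset V} (hs : ∀ z y, p z y ≠ 0 → z ∈ s y) (x y : V) :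
    ∑' n, nstep p n x y
      = (potential (kernelOp fun a b => ENNReal.ofReal (p a b)) (Pi.single y 1) x).toReal := by
  rw [potential_apply, ENNReal.tsum_toReal_eq fun n => by
    rw [← ofReal_nstep hp hs]; exact ENNReal.ofReal_ne_top]
  simp only [← ofReal_nstep hp hs, ENNReal.toReal_ofReal (nstep_nonneg hp _ x y)]

variable {U : Set V}

theorem killedKernel_nonneg (hp : ∀ a b, 0 ≤ p a b) (a b : V) : 0 ≤ killedKernel p U a b := by
  unfold killedKernel
  split_ifs
  exacts [hp a b, le_rfl]

theorem killedKernel_ne_zero {a b : V} (h : killedKernel p U a b ≠ 0) : p a b ≠ 0 := by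
  unfold killedKernel at h
  split_ifs at h
  exacts [h, absurd rfl h]

theorem exists_ofReal_eq_killedKernel_add :
    ∃ R : V → V → ℝ≥0∞, (fun a b => ENNReal.ofReal (p a b))
      = (fun a b => ENNReal.ofReal (killedKernel p U a b)) + R ∧
      ∀ a ∈ U, ∀ b ∈ U, R a b = 0 := by
  classical
  refine ⟨fun a b => if a ∈ U ∧ b ∈ U then 0 else ENNReal.ofReal (p a b), ?_, ?_⟩
  · ext a b
    simp only [Pi.add_apply, killedKernel]
    split_ifs <;> simp
  · intro a ha b hb
    simp [ha, hb]

theorem tsum_nstep_killedKernel_le (hp : ∀ a b, 0 ≤ p a b) {s : V → Finset V}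
    (hs : ∀ z y, p z y ≠ 0 → z ∈ s y) {x y : V} (hsum : Summable fun n => nstep p n x y) :
    ∑' n, nstep (killedKernel p U) n x y ≤ ∑' n, nstep p n x y := by
  classical
  obtain ⟨R, hsplit, -⟩ := exists_ofReal_eq_killedKernel_add (p := p) (U := U)
  have hfin := potential_single_eq_ofReal_tsum hp hs hsum ▸ ENNReal.ofReal_ne_top
  rw [tsum_nstep_eq_toReal_potential (killedKernel_nonneg hp)
      (fun z y h => hs z y (killedKernel_ne_zero h)),
    tsum_nstep_eq_toReal_potential hp hs]
  rw [hsplit] at hfin ⊢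
  exact ENNReal.toReal_mono hfin (potential_kernelOp_le_add _ _ _ x)

theorem tsum_nstep_le_tsum_nstep_killedKernel_add (hp : ∀ a b, 0 ≤ p a b) {s : V → Finset V}
    (hs : ∀ z y, p z y ≠ 0 → z ∈ s y) (hrow : ∀ a, ∑' b, ENNReal.ofReal (p a b) ≤ 1) {x y : V}
    (hx : x ∈ U) (hsum : ∀ u, Summable fun n => nstep p n u y) {K : ℝ} (hK0 : 0 ≤ K)
    (hK : ∀ u ∉ U, ∑' n, nstep p n u y ≤ K) :
    ∑' n, nstep p n x y ≤ ∑' n, nstep (killedKernel p U) n x y + K := by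
  classical
  obtain ⟨R, hsplit, hR⟩ := exists_ofReal_eq_killedKernel_add (p := p) (U := U)
  have hpot : ∀ u, potential (kernelOp fun a b => ENNReal.ofReal (p a b)) (Pi.single y 1) u
      = ENNReal.ofReal (∑' n, nstep p n u y) := fun u =>
    potential_single_eq_ofReal_tsum hp hs (hsum u)
  have hrow' : kernelOp (fun a b => ENNReal.ofReal (p a b)) 1 ≤ 1 := fun a => by
    simpa using hrow a
  have hQ : ∀ a b, b ∉ U → ENNReal.ofReal (killedKernel p U a b) = 0 := fun a b hb => by
    simp [killedKernel, hb]
  rw [tsum_nstep_eq_toReal_potential hp hs, tsum_nstep_eq_toReal_potential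
    (killedKernel_nonneg hp) (fun z y h => hs z y (killedKernel_ne_zero h))]
  rw [hsplit] at hpot hrow' ⊢
  have hB := (hpot x).symm ▸ ENNReal.ofReal_ne_top
  have hA := ne_top_of_le_ne_top hB (potential_kernelOp_le_add _ R _ x)
  have hexit := potential_le_potential_add_of_exit hrow' hQ hR (Pi.single y 1) hx
    fun u hu => (hpot u).le.trans (ENNReal.ofReal_le_ofReal (hK u hu))
  calc _ ≤ (_ + ENNReal.ofReal K).toReal :=
        ENNReal.toReal_mono (ENNReal.add_ne_top.2 ⟨hA, ENNReal.ofReal_ne_top⟩) hexit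
    _ = _ := by rw [ENNReal.toReal_add hA ENNReal.ofReal_ne_top, ENNReal.toReal_ofReal hK0]

end RealKernels

section Green

variable {V : Type*} {p : V → V → ℝ} {lam : V → ℝ} {U : Set V} {x y : V}

theorem lam_pos_of_green_pos (hlam : 0 ≤ lam y) (h : 0 < green p lam x y) : 0 < lam y := by
  refine hlam.lt_of_ne fun h0 => h.ne' ?_
  rw [green, ← h0, div_zero, zero_mul]

theorem killedGreen_nonneg (hp : ∀ a b, 0 ≤ p a b) (hlam : 0 ≤ lam y) :
    0 ≤ killedGreen p lam U x y :=
  mul_nonneg (one_div_nonneg.2 hlam)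
    (tsum_nonneg fun n => nstep_nonneg (killedKernel_nonneg hp) n x y)

theorem killedGreen_le_green (hp : ∀ a b, 0 ≤ p a b) {s : V → Finset V}
    (hs : ∀ z y, p z y ≠ 0 → z ∈ s y) (hsum : Summable fun n => nstep p n x y)
    (hlam : 0 ≤ lam y) : killedGreen p lam U x y ≤ green p lam x y :=
  mul_le_mul_of_nonneg_left (tsum_nstep_killedKernel_le hp hs hsum) (one_div_nonneg.2 hlam)

theorem green_le_killedGreen_add (hp : ∀ a b, 0 ≤ p a b) {s : V → Finset V}
    (hs : ∀ z y, p z y ≠ 0 → z ∈ s y) (hrow : ∀ a, ∑' b, ENNReal.ofReal (p a b) ≤ 1)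
    (hx : x ∈ U) (hsum : ∀ u, Summable fun n => nstep p n u y) (hlam : 0 < lam y) {K : ℝ}
    (hK0 : 0 ≤ K) (hK : ∀ u ∉ U, green p lam u y ≤ K) :
    green p lam x y ≤ killedGreen p lam U x y + K := by
  have hsum_eq : ∀ u, ∑' n, nstep p n u y = lam y * green p lam u y := fun u => by
    rw [green, ← mul_assoc, mul_one_div_cancel hlam.ne', one_mul]
  have h := tsum_nstep_le_tsum_nstep_killedKernel_add hp hs hrow hx hsum
    (mul_nonneg hlam.le hK0) fun u hu => (hsum_eq u).trans_le
      (mul_le_mul_of_nonneg_left (hK u hu) hlam.le)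
  calc green p lam x y
      ≤ 1 / lam y * (∑' n, nstep (killedKernel p U) n x y + lam y * K) :=
        mul_le_mul_of_nonneg_left h (one_div_nonneg.2 hlam.le)
    _ = killedGreen p lam U x y + K := by
        rw [mul_add, killedGreen, ← mul_assoc, one_div_mul_cancel hlam.ne', one_mul]

end Green

section WeightedGraph

variable {V : Type*} {G : SimpleGraph V} {w : V → V → ℝ}
  {lam : V → ℝ} {p : V → V → ℝ}

theorem adj_of_transition_ne_zero (hw_nonneg : ∀ x y, 0 ≤ w x y)
    (hw_adj : ∀ x y, 0 < w x y ↔ G.Adj x y) (hp : ∀ x y, p x y = w x y / lam x) {a b : V}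
    (h : p a b ≠ 0) : G.Adj a b := by
  rw [hp] at h
  exact (hw_adj a b).1 ((hw_nonneg a b).lt_of_ne' (div_ne_zero_iff.1 h).1)

theorem transition_nonneg [∀ v, Fintype (G.neighborSet v)] (hw_nonneg : ∀ x y, 0 ≤ w x y)
    (hlam : ∀ x, lam x = ∑ y ∈ G.neighborFinset x, w x y) (hp : ∀ x y, p x y = w x y / lam x)
    (a b : V) : 0 ≤ p a b := by
  rw [hp]
  exact div_nonneg (hw_nonneg a b) (hlam a ▸ Finset.sum_nonneg fun c _ => hw_nonneg a c)

theorem tsum_ofReal_transition_le_one [∀ v, Fintype (G.neighborSet v)]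
    (hw_nonneg : ∀ x y, 0 ≤ w x y) (hw_adj : ∀ x y, 0 < w x y ↔ G.Adj x y)
    (hlam : ∀ x, lam x = ∑ y ∈ G.neighborFinset x, w x y) (hp : ∀ x y, p x y = w x y / lam x)
    (a : V) : ∑' b, ENNReal.ofReal (p a b) ≤ 1 := by
  have hsupp : ∀ b ∉ G.neighborFinset a, ENNReal.ofReal (p a b) = 0 := fun b hb => by
    rw [SimpleGraph.mem_neighborFinset] at hb
    rw [not_imp_comm.mp (adj_of_transition_ne_zero hw_nonneg hw_adj hp) hb, ENNReal.ofReal_zero]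
  rw [tsum_eq_sum hsupp, ← ENNReal.ofReal_sum_of_nonneg fun b _ =>
    transition_nonneg hw_nonneg hlam hp a b, ← ENNReal.ofReal_one]
  refine ENNReal.ofReal_le_ofReal ?_
  simp only [hp, ← Finset.sum_div, ← hlam, div_self_le_one]

theorem killedGreen_le_green_and_green_le_killedGreen_add [∀ v, Fintype (G.neighborSet v)]
    (hw_nonneg : ∀ x y, 0 ≤ w x y) (hw_adj : ∀ x y, 0 < w x y ↔ G.Adj x y)
    (hlam : ∀ x, lam x = ∑ y ∈ G.neighborFinset x, w x y) (hp : ∀ x y, p x y = w x y / lam x)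
    {U : Set V} {x y : V} (hx : x ∈ U) (hsum : ∀ u, Summable fun n => nstep p n u y)
    (hlam_pos : 0 < lam y) {K : ℝ} (hK0 : 0 ≤ K) (hK : ∀ u ∉ U, green p lam u y ≤ K) :
    killedGreen p lam U x y ≤ green p lam x y ∧ green p lam x y ≤ killedGreen p lam U x y + K := by
  have hs : ∀ z y, p z y ≠ 0 → z ∈ G.neighborFinset y := fun z y h =>
    (G.mem_neighborFinset y z).2 (adj_of_transition_ne_zero hw_nonneg hw_adj hp h).symm
  have hp_nonneg := transition_nonneg hw_nonneg hlam hp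
  exact ⟨killedGreen_le_green hp_nonneg hs (hsum x) hlam_pos.le,
    green_le_killedGreen_add hp_nonneg hs (tsum_ofReal_transition_le_one hw_nonneg hw_adj hlam hp)
      hx hsum hlam_pos hK0 hK⟩

end WeightedGraph

theorem exists_one_lt_mul_rpow_neg_le (A : ℝ) {ν ε : ℝ} (hν : 0 < ν) (hε : 0 < ε) :
    ∃ C : ℝ, 1 < C ∧ A * C ^ (-ν) ≤ ε := by
  have h := (tendsto_rpow_neg_atTop hν).const_mul A
  rw [mul_zero] at h
  obtain ⟨C, hC, hC1⟩ := ((h.eventually (eventually_le_nhds hε)).and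
    (Filter.eventually_gt_atTop 1)).exists
  exact ⟨C, hC1, hC⟩

theorem mul_mul_rpow_neg_le {A C M t ν ε : ℝ} (hν : 0 ≤ ν) (hA : 0 ≤ A) (hC : 0 ≤ C)
    (hCA : A * C ^ (-ν) ≤ ε) (ht : 0 < t) (htM : t ≤ M) :
    A * (C * M) ^ (-ν) ≤ ε * t ^ (-ν) := by
  rw [Real.mul_rpow hC (ht.le.trans htM), ← mul_assoc]
  calc A * C ^ (-ν) * M ^ (-ν) ≤ ε * M ^ (-ν) :=
        mul_le_mul_of_nonneg_right hCA (Real.rpow_nonneg (ht.le.trans htM) _)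
    _ ≤ ε * t ^ (-ν) :=
        mul_le_mul_of_nonneg_left (Real.rpow_le_rpow_of_nonpos ht htM (neg_nonpos.2 hν))
          ((mul_nonneg hA (Real.rpow_nonneg hC _)).trans hCA)

/-- killed Green function estimates: if U₁ ⊆ U₂ ⊂⊂ G are well separated
(d(U₁,U₂ᶜ) ≥ C·(diam U₁ ∨ 1)) then g_{U₂} is comparable to d^{-ν} on U₁. -/
theorem killed_green_estimates
    {V : Type*} (G : SimpleGraph V) [∀ v : V, Fintype (G.neighborSet v)] [Infinite V]
    (hconn : G.Connected)
    (w : V → V → ℝ) (lam : V → ℝ) (p : V → V → ℝ) (d : V → V → ℝ)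
    (hw_symm : ∀ x y, w x y = w y x)
    (hw_nonneg : ∀ x y, 0 ≤ w x y)
    (hw_adj : ∀ x y, 0 < w x y ↔ G.Adj x y)
    (hlam : ∀ x, lam x = ∑ y ∈ G.neighborFinset x, w x y)
    (hp : ∀ x y, p x y = w x y / lam x)
    (htrans : ∀ x y, Summable (fun n => nstep p n x y))
    (c₀ : ℝ) (hc₀ : 0 < c₀) (hp₀ : ∀ x y, G.Adj x y → c₀ ≤ p x y)
    (hd_symm : ∀ x y, d x y = d y x)
    (hd_self : ∀ x, d x x = 0)
    (hd_nonneg : ∀ x y, 0 ≤ d x y)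
    (hd_tri : ∀ x y z, d x z ≤ d x y + d y z)
    (hBfin : ∀ (x : V) (L : ℝ), {y | d x y ≤ L}.Finite)
    (α β : ℝ) (hα : 2 < α) (hβ₂ : 2 ≤ β) (hβα : β < α)
    (cV CV : ℝ) (hcV : 0 < cV)
    (hVol : ∀ (x : V) (L : ℝ), 1 ≤ L →
      cV * L ^ α ≤ ∑ y ∈ (hBfin x L).toFinset, lam y ∧
        ∑ y ∈ (hBfin x L).toFinset, lam y ≤ CV * L ^ α)
    (cg Cg : ℝ) (hcg : 0 < cg)
    (hGdiag : ∀ x : V, cg ≤ green p lam x x ∧ green p lam x x ≤ Cg)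
    (hGoff : ∀ x y : V, x ≠ y →
      cg * d x y ^ (-(α - β)) ≤ green p lam x y ∧
        green p lam x y ≤ Cg * d x y ^ (-(α - β))) :
    ∃ C : ℝ, 1 < C ∧ ∀ (U₁ U₂ : Set V), U₁ ⊆ U₂ → U₂.Finite →
      (∀ x ∈ U₁, ∀ y ∉ U₂, C * max (sSup (Set.image2 d U₁ U₁)) 1 ≤ d x y) →
      (∀ x ∈ U₁, ∀ y ∈ U₁, x ≠ y →
          cg / 2 * d x y ^ (-(α - β)) ≤ killedGreen p lam U₂ x y ∧
            killedGreen p lam U₂ x y ≤ Cg * d x y ^ (-(α - β))) ∧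
      (∀ x ∈ U₁, cg / 2 ≤ killedGreen p lam U₂ x x ∧ killedGreen p lam U₂ x x ≤ Cg) := by
  have hν : 0 < α - β := sub_pos.2 hβα
  have hlam_pos : ∀ y, 0 < lam y := fun y => lam_pos_of_green_pos
    (hlam y ▸ Finset.sum_nonneg fun z _ => hw_nonneg y z) (hcg.trans_le (hGdiag y).1)
  obtain ⟨C, hC1, hC⟩ := exists_one_lt_mul_rpow_neg_le Cg hν (half_pos hcg)
  refine ⟨C, hC1, fun U₁ U₂ h12 hfin hsep => ?_⟩
  set M := max (sSup (Set.image2 d U₁ U₁)) 1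
  have hCM : 0 < C * M := mul_pos (by linarith) (by positivity)
  have hCg : ∀ x : V, 0 ≤ Cg := fun x => hcg.le.trans ((hGdiag x).1.trans (hGdiag x).2)
  have hexit : ∀ y ∈ U₁, ∀ u ∉ U₂, green p lam u y ≤ Cg * (C * M) ^ (-(α - β)) :=
    fun y hy u hu => ((hGoff u y fun h => hu (h ▸ h12 hy)).2).trans <|
      mul_le_mul_of_nonneg_left (Real.rpow_le_rpow_of_nonpos hCM
        (hd_symm u y ▸ hsep y hy u hu) (neg_nonpos.2 hν.le)) (hCg y)
  have hcomp : ∀ x ∈ U₁, ∀ y ∈ U₁, killedGreen p lam U₂ x y ≤ green p lam x y ∧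
      green p lam x y ≤ killedGreen p lam U₂ x y + Cg * (C * M) ^ (-(α - β)) :=
    fun x hx y hy => killedGreen_le_green_and_green_le_killedGreen_add hw_nonneg hw_adj hlam hp
      (h12 hx) (htrans · y) (hlam_pos y) (mul_nonneg (hCg y) (by positivity)) (hexit y hy)
  have hlower : ∀ x ∈ U₁, ∀ y ∈ U₁, ∀ t, 0 < t → t ≤ M → cg * t ^ (-(α - β)) ≤ green p lam x y →
      cg / 2 * t ^ (-(α - β)) ≤ killedGreen p lam U₂ x y := fun x hx y hy t ht htM hg => by
    linarith [(hcomp x hx y hy).2, mul_mul_rpow_neg_le hν.le (hCg y) (by linarith) hC ht htM]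
  refine ⟨fun x hx y hy hxy => ⟨?_, (hcomp x hx y hy).1.trans (hGoff x y hxy).2⟩,
    fun x hx => ⟨?_, (hcomp x hx x hx).1.trans (hGdiag x).2⟩⟩
  · rcases (hd_nonneg x y).eq_or_lt with hd | hd
    · rw [← hd, Real.zero_rpow (neg_ne_zero.2 hν.ne'), mul_zero]
      exact killedGreen_nonneg (transition_nonneg hw_nonneg hlam hp) (hlam_pos y).le
    · refine hlower x hx y hy _ hd (le_max_of_le_left (le_csSup ?_ ⟨x, hx, y, hy, rfl⟩))
        (hGoff x y hxy).1
      exact ((hfin.subset h12).image2 d (hfin.subset h12)).bddAbove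
  · simpa using hlower x hx x hx 1 one_pos (le_max_right _ _) (by simpa using (hGdiag x).1)
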